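/- Let ω > 0 and x_k ∈ ℝ³. The function f̂(x) = (1 + |x − x_k|)/ω² − 2·(1 − cos(ω·|x − x_k|))/(ω⁴·|x − x_k|) satisfies Δf̂(x) + ω²·f̂(x) = 1 + |x − x_k| for every x ∈ ℝ³ with x ≠ x_k. -/

import Mathlib

/-!
Write `f̂ = u(r) / r` with `r = ‖x - x_k‖` and `u(r) = (r + r²)/ω² - 2(1 - cos ωr)/ω⁴`.
A radial function `g(r)` on an `n`-dimensional space has Laplacian `g'' + (n - 1) g' / r`;
for `n = 3` this gives `Δ(u / r) = u'' / r`. Since `u'' = 2(1 - cos ωr)/ω²`, we get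
`u'' + ω² u = r + r²`, which is the equation after division by `r`.
-/

/-- The Laplacian of a function on ℝ³: the sum, over the standard orthonormal
basis, of the second directional derivatives. -/
noncomputable def laplacian {F : Type*} [NormedAddCommGroup F] [NormedSpace ℝ F]
    (f : EuclideanSpace ℝ (Fin 3) → F) (x : EuclideanSpace ℝ (Fin 3)) : F :=
  ∑ i : Fin 3, iteratedFDeriv ℝ 2 f x
    ![EuclideanSpace.single i (1:ℝ), EuclideanSpace.single i (1:ℝ)]

section Radial

open InnerProductSpace Laplacian Filter Topology

variable {E : Type*} [NormedAddCommGroup E] [InnerProductSpace ℝ E]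

theorem hasFDerivAt_norm {x : E} (hx : x ≠ 0) :
    HasFDerivAt (‖·‖) (‖x‖⁻¹ • innerSL ℝ x) x := by
  have h := ((hasStrictFDerivAt_norm_sq x).hasFDerivAt.sqrt (by positivity)).congr_fderiv
    (show (1 / (2 * √(‖x‖ ^ 2))) • (2 • innerSL ℝ x) = ‖x‖⁻¹ • innerSL ℝ x by
      rw [Real.sqrt_sq (norm_nonneg x), two_smul, ← two_smul ℝ, smul_smul]
      congr 1
      field_simp)
  simpa [Real.sqrt_sq (norm_nonneg _)] using h

theorem HasDerivAt.hasFDerivAt_comp_norm_sub {g : ℝ → ℝ} {g' : ℝ} {c x : E}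
    (hg : HasDerivAt g g' ‖x - c‖) (hx : x ≠ c) :
    HasFDerivAt (fun y => g ‖y - c‖) ((g' / ‖x - c‖) • innerSL ℝ (x - c)) x := by
  have hn : HasFDerivAt (fun y => ‖y - c‖) (‖x - c‖⁻¹ • innerSL ℝ (x - c)) x :=
    (hasFDerivAt_comp_sub c).2 (hasFDerivAt_norm (sub_ne_zero.2 hx))
  refine (hg.comp_hasFDerivAt x hn).congr_fderiv ?_
  rw [smul_smul, div_eq_mul_inv]

theorem iteratedFDeriv_two_comp_norm_sub_apply {g g' : ℝ → ℝ} {g'' : ℝ} {c x : E} (hx : x ≠ c)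
    (hg : ∀ᶠ s in 𝓝 ‖x - c‖, HasDerivAt g (g' s) s) (hg' : HasDerivAt g' g'' ‖x - c‖)
    (v w : E) :
    iteratedFDeriv ℝ 2 (fun y => g ‖y - c‖) x ![v, w] =
      g' ‖x - c‖ / ‖x - c‖ * ⟪v, w⟫_ℝ
        + (g'' * ‖x - c‖ - g' ‖x - c‖) / ‖x - c‖ ^ 3 * (⟪x - c, v⟫_ℝ * ⟪x - c, w⟫_ℝ) := by
  have hr : ‖x - c‖ ≠ 0 := norm_ne_zero_iff.2 (sub_ne_zero.2 hx)
  have hfderiv : fderiv ℝ (fun y => g ‖y - c‖) =ᶠ[𝓝 x]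
      fun y => (g' ‖y - c‖ / ‖y - c‖) • innerSL ℝ (y - c) := by
    filter_upwards [isOpen_ne.mem_nhds hx,
      ((continuous_id.sub continuous_const).norm.tendsto x).eventually hg] with y hy hgy
    exact (hgy.hasFDerivAt_comp_norm_sub hy).fderiv
  have hquot : HasDerivAt (fun s => g' s / s) ((g'' * ‖x - c‖ - g' ‖x - c‖) / ‖x - c‖ ^ 2)
      ‖x - c‖ := by
    simpa only [mul_one] using hg'.fun_div (hasDerivAt_id' _) hr
  have hinner : HasFDerivAt (fun y => innerSL ℝ (y - c)) (innerSL ℝ) x :=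
    (hasFDerivAt_comp_sub c).2 (innerSL ℝ).hasFDerivAt
  have hsecond : HasFDerivAt (fun y => (g' ‖y - c‖ / ‖y - c‖) • innerSL ℝ (y - c)) _ x :=
    (hquot.hasFDerivAt_comp_norm_sub hx).smul hinner
  rw [iteratedFDeriv_two_apply, hfderiv.fderiv_eq, hsecond.fderiv]
  simp only [Matrix.cons_val_zero, Matrix.cons_val_one, add_apply,
    smul_apply, ContinuousLinearMap.smulRight_apply, innerSL_apply_apply,
    smul_eq_mul]
  rw [innerSL_apply_apply]
  field_simp

theorem laplacian_comp_norm_sub [FiniteDimensional ℝ E] {g g' : ℝ → ℝ} {g'' : ℝ} {c x : E}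
    (hx : x ≠ c) (hg : ∀ᶠ s in 𝓝 ‖x - c‖, HasDerivAt g (g' s) s)
    (hg' : HasDerivAt g' g'' ‖x - c‖) :
    Δ (fun y => g ‖y - c‖) x = g'' + (Module.finrank ℝ E - 1) * g' ‖x - c‖ / ‖x - c‖ := by
  have hr : ‖x - c‖ ≠ 0 := norm_ne_zero_iff.2 (sub_ne_zero.2 hx)
  set b := stdOrthonormalBasis ℝ E
  have hb : ∀ i, ⟪b i, b i⟫_ℝ = 1 := fun i => by
    rw [real_inner_self_eq_norm_sq, b.orthonormal.1 i, one_pow]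
  rw [laplacian_eq_iteratedFDeriv_orthonormalBasis _ b]
  simp only [iteratedFDeriv_two_comp_norm_sub_apply hx hg hg', hb, ← sq, Finset.sum_add_distrib,
    ← Finset.mul_sum, b.sum_sq_inner_left, Finset.sum_const, Finset.card_univ, Fintype.card_fin,
    nsmul_eq_mul]
  field_simp
  ring

theorem laplacian_div_norm_sub [FiniteDimensional ℝ E] (hE : Module.finrank ℝ E = 3)
    {u u' : ℝ → ℝ} {u'' : ℝ} {c x : E} (hx : x ≠ c)
    (hu : ∀ᶠ s in 𝓝 ‖x - c‖, HasDerivAt u (u' s) s) (hu' : HasDerivAt u' u'' ‖x - c‖) :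
    Δ (fun y => u ‖y - c‖ / ‖y - c‖) x = u'' / ‖x - c‖ := by
  have hr : ‖x - c‖ ≠ 0 := norm_ne_zero_iff.2 (sub_ne_zero.2 hx)
  have hg : ∀ᶠ s in 𝓝 ‖x - c‖,
      HasDerivAt (fun s => u s / s) ((u' s * s - u s) / s ^ 2) s := by
    filter_upwards [isOpen_ne.mem_nhds hr, hu] with s hs hus
    simpa only [mul_one] using hus.fun_div (hasDerivAt_id' s) hs
  have hg' : HasDerivAt (fun s => (u' s * s - u s) / s ^ 2)
      ((u'' * ‖x - c‖ ^ 2 - 2 * (u' ‖x - c‖ * ‖x - c‖ - u ‖x - c‖)) / ‖x - c‖ ^ 3) ‖x - c‖ := by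
    refine (((hu'.fun_mul (hasDerivAt_id' _)).fun_sub hu.self_of_nhds).fun_div
      (hasDerivAt_pow 2 _) (pow_ne_zero 2 hr)).congr_deriv ?_
    field_simp
    ring
  rw [laplacian_comp_norm_sub (g := fun s => u s / s) hx hg hg', hE]
  field_simp
  ring

end Radial

open Laplacian in
theorem laplacian_eq_innerProductSpace_laplacian {F : Type*} [NormedAddCommGroup F]
    [NormedSpace ℝ F] (f : EuclideanSpace ℝ (Fin 3) → F) (x : EuclideanSpace ℝ (Fin 3)) :
    _root_.laplacian f x = Δ f x := by
  rw [InnerProductSpace.laplacian_eq_iteratedFDeriv_orthonormalBasis f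
    (EuclideanSpace.basisFun (Fin 3) ℝ)]
  simp [_root_.laplacian]

noncomputable def helmholtzProfile (ω s : ℝ) : ℝ :=
  (s + s ^ 2) / ω ^ 2 - 2 * (1 - Real.cos (ω * s)) / ω ^ 4

noncomputable def helmholtzProfileDeriv (ω s : ℝ) : ℝ :=
  (1 + 2 * s) / ω ^ 2 - 2 * Real.sin (ω * s) / ω ^ 3

theorem hasDerivAt_helmholtzProfile {ω : ℝ} (hω : ω ≠ 0) (s : ℝ) :
    HasDerivAt (helmholtzProfile ω) (helmholtzProfileDeriv ω s) s := by
  have hcos := ((hasDerivAt_id' s).const_mul ω).cos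
  refine ((((hasDerivAt_id' s).fun_add (hasDerivAt_pow 2 s)).div_const (ω ^ 2)).fun_sub
    ((((hasDerivAt_const s 1).fun_sub hcos).const_mul 2).div_const (ω ^ 4))).congr_deriv ?_
  unfold helmholtzProfileDeriv
  field_simp
  ring

theorem hasDerivAt_helmholtzProfileDeriv {ω : ℝ} (hω : ω ≠ 0) (s : ℝ) :
    HasDerivAt (helmholtzProfileDeriv ω) (2 * (1 - Real.cos (ω * s)) / ω ^ 2) s := by
  have hsin := ((hasDerivAt_id' s).const_mul ω).sin
  refine (((((hasDerivAt_id' s).const_mul 2).const_add 1).div_const (ω ^ 2)).fun_sub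
    ((hsin.const_mul 2).div_const (ω ^ 3))).congr_deriv ?_
  field_simp

theorem helmholtzProfile_div {ω s : ℝ} (hs : s ≠ 0) :
    helmholtzProfile ω s / s = (1 + s) / ω ^ 2 - 2 * (1 - Real.cos (ω * s)) / (ω ^ 4 * s) := by
  unfold helmholtzProfile
  field_simp

theorem helmholtzProfile_ode {ω : ℝ} (hω : ω ≠ 0) (s : ℝ) :
    2 * (1 - Real.cos (ω * s)) / ω ^ 2 + ω ^ 2 * helmholtzProfile ω s = s + s ^ 2 := by
  unfold helmholtzProfile
  field_simp
  ring

open Filter in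
/-- For `ω > 0` and `x_k ∈ ℝ³`, the particular solution
`f̂(x) = (1 + |x−x_k|)/ω² − 2(1 − cos(ω|x−x_k|))/(ω⁴|x−x_k|)` satisfies
`Δf̂ + ω² f̂ = 1 + |x − x_k|` away from `x_k`. -/
theorem particular_radial_solution_helmholtz (ω : ℝ) (hω : 0 < ω)
    (xk : EuclideanSpace ℝ (Fin 3)) (x : EuclideanSpace ℝ (Fin 3)) (hx : x ≠ xk) :
    laplacian (fun y : EuclideanSpace ℝ (Fin 3) =>
        (1 + ‖y - xk‖) / ω^2 - 2 * (1 - Real.cos (ω * ‖y - xk‖)) / (ω^4 * ‖y - xk‖)) x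
      + ω^2 * ((1 + ‖x - xk‖) / ω^2
          - 2 * (1 - Real.cos (ω * ‖x - xk‖)) / (ω^4 * ‖x - xk‖))
      = 1 + ‖x - xk‖ := by
  have hr : ‖x - xk‖ ≠ 0 := norm_ne_zero_iff.2 (sub_ne_zero.2 hx)
  -- only near `x`: at `y = xk` the two sides take different junk values of division by zero
  have hlocal : (fun y : EuclideanSpace ℝ (Fin 3) =>
        (1 + ‖y - xk‖) / ω^2 - 2 * (1 - Real.cos (ω * ‖y - xk‖)) / (ω^4 * ‖y - xk‖))
      =ᶠ[nhds x] fun y => helmholtzProfile ω ‖y - xk‖ / ‖y - xk‖ := by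
    filter_upwards [isOpen_ne.mem_nhds hx] with y hy
    rw [helmholtzProfile_div (norm_ne_zero_iff.2 (sub_ne_zero.2 hy))]
  rw [laplacian_eq_innerProductSpace_laplacian,
    (InnerProductSpace.laplacian_congr_nhds hlocal).eq_of_nhds,
    laplacian_div_norm_sub finrank_euclideanSpace_fin hx
      (Eventually.of_forall (hasDerivAt_helmholtzProfile hω.ne'))
      (hasDerivAt_helmholtzProfileDeriv hω.ne' _),
    ← helmholtzProfile_div hr]
  calc _ = (2 * (1 - Real.cos (ω * ‖x - xk‖)) / ω ^ 2 + ω ^ 2 * helmholtzProfile ω ‖x - xk‖)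
        / ‖x - xk‖ := by ring
    _ = 1 + ‖x - xk‖ := by
      rw [helmholtzProfile_ode hω.ne']
      field_simp
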